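/- For every N ∈ ℕ and every τ > 0, there exist constants a = a(τ) ≥ 0 and b = b(N,τ) ≥ 0 such that G_N(τ·c) ≤ a·G_N(c) + b for all c ≥ 0. One may take a = 2τ. -/

import Mathlib

/-!
For `c ≥ max τ e_[N]` we have `τ c ≤ c²`, and `log_[N] (c²) ≤ 2 log_[N] c` once `c ≥ e_[N]`;
hence `G_N (τ c) ≤ τ c · 2 log_[N] c = 2τ G_N c`. On the bounded range `c ≤ max τ e_[N]` the
monotone function `G_N` gives `G_N (τ c) ≤ G_N (τ · max τ e_[N])`, which serves as `b`.
-/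

/-- Tower of exponentials: `e_[0] = 1`, `e_[N] = exp (e_[N-1])`. -/
noncomputable def towerE : ℕ → ℝ
  | 0 => 1
  | n + 1 => Real.exp (towerE n)

/-- `N`-fold iterated logarithm. -/
noncomputable def iterLog (N : ℕ) (t : ℝ) : ℝ := Real.log^[N] t

/-- `G_N(t) = 0` for `t ≤ e_[N-1]` and `G_N(t) = t · log_[N](t)` for `t > e_[N-1]`. -/
noncomputable def G (N : ℕ) (t : ℝ) : ℝ :=
  if t ≤ towerE (N - 1) then 0 else t * iterLog N t

section Tower

theorem towerE_succ (n : ℕ) : towerE (n + 1) = Real.exp (towerE n) := rfl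

theorem one_le_towerE (n : ℕ) : 1 ≤ towerE n := by
  induction n with
  | zero => simp [towerE]
  | succ n ih => exact Real.one_le_exp (by linarith)

theorem towerE_pos (n : ℕ) : 0 < towerE n := one_pos.trans_le (one_le_towerE n)

theorem towerE_lt_succ (n : ℕ) : towerE n < towerE (n + 1) := by
  linarith [Real.add_one_le_exp (towerE n), towerE_succ n]

theorem two_le_towerE_succ (n : ℕ) : 2 ≤ towerE (n + 1) := by
  linarith [Real.add_one_le_exp (towerE n), towerE_succ n, one_le_towerE n]

theorem towerE_le_log {n : ℕ} {t : ℝ} (h : towerE (n + 1) ≤ t) : towerE n ≤ Real.log t :=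
  (Real.le_log_iff_exp_le ((towerE_pos _).trans_le h)).2 h

end Tower

section IterLog

theorem iterLog_succ (n : ℕ) (t : ℝ) : iterLog (n + 1) t = iterLog n (Real.log t) :=
  Function.iterate_succ_apply _ _ _

theorem iterLog_nonneg (n : ℕ) {t : ℝ} (ht : towerE n ≤ t) : 0 ≤ iterLog (n + 1) t := by
  induction n generalizing t with
  | zero => simpa [iterLog] using Real.log_nonneg ht
  | succ n ih => rw [iterLog_succ]; exact ih (towerE_le_log ht)

theorem iterLog_monotoneOn (n : ℕ) : MonotoneOn (iterLog (n + 1)) (Set.Ici (towerE n)) := by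
  induction n with
  | zero =>
    intro s hs t _ hst
    simpa [iterLog] using Real.log_le_log (one_pos.trans_le hs) hst
  | succ n ih =>
    intro s hs t ht hst
    rw [iterLog_succ, iterLog_succ _ t]
    exact ih (towerE_le_log hs) (towerE_le_log (le_trans hs hst))
      (Real.log_le_log ((towerE_pos _).trans_le hs) hst)

theorem iterLog_sq_le (n : ℕ) {t : ℝ} (ht : towerE (n + 1) ≤ t) :
    iterLog (n + 1) (t ^ 2) ≤ 2 * iterLog (n + 1) t := by
  induction n generalizing t with
  | zero => simp [iterLog, Real.log_pow]
  | succ n ih =>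
    have hlog : towerE (n + 1) ≤ Real.log t := towerE_le_log ht
    have htwo : 2 ≤ Real.log t := (two_le_towerE_succ n).trans hlog
    have hlog' : towerE n ≤ Real.log t := (towerE_lt_succ n).le.trans hlog
    rw [iterLog_succ _ (t ^ 2), iterLog_succ _ t, Real.log_pow, Nat.cast_ofNat]
    -- `log (t²) = 2 log t ≤ (log t)²`, since `log t ≥ 2`
    calc iterLog (n + 1) (2 * Real.log t)
        ≤ iterLog (n + 1) (Real.log t ^ 2) :=
          iterLog_monotoneOn n (show towerE n ≤ 2 * Real.log t by linarith)
            (show towerE n ≤ Real.log t ^ 2 by nlinarith) (by nlinarith)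
      _ ≤ 2 * iterLog (n + 1) (Real.log t) := ih hlog

end IterLog

section G

theorem G_succ_of_le {n : ℕ} {t : ℝ} (ht : t ≤ towerE n) : G (n + 1) t = 0 := by
  simp [G, ht]

theorem G_succ_of_lt {n : ℕ} {t : ℝ} (ht : towerE n < t) :
    G (n + 1) t = t * iterLog (n + 1) t := by
  simp [G, not_le.2 ht]

theorem G_succ_nonneg (n : ℕ) (t : ℝ) : 0 ≤ G (n + 1) t := by
  rcases le_or_gt t (towerE n) with ht | ht
  · exact (G_succ_of_le ht).ge
  · rw [G_succ_of_lt ht]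
    exact mul_nonneg ((towerE_pos n).trans ht).le (iterLog_nonneg n ht.le)

theorem G_succ_monotone (n : ℕ) : Monotone (G (n + 1)) := by
  intro s t hst
  rcases le_or_gt s (towerE n) with hs | hs
  · exact (G_succ_of_le hs).trans_le (G_succ_nonneg n t)
  · have ht : towerE n < t := hs.trans_le hst
    rw [G_succ_of_lt hs, G_succ_of_lt ht]
    exact mul_le_mul hst (iterLog_monotoneOn n hs.le ht.le hst) (iterLog_nonneg n hs.le)
      ((towerE_pos n).trans ht).le

theorem G_succ_mul_le {n : ℕ} {τ c : ℝ} (hτ : 0 ≤ τ) (hτc : τ ≤ c) (hc : towerE (n + 1) ≤ c) :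
    G (n + 1) (τ * c) ≤ 2 * τ * G (n + 1) c := by
  have hGc : 0 ≤ 2 * τ * G (n + 1) c := mul_nonneg (by positivity) (G_succ_nonneg n c)
  rcases le_or_gt (τ * c) (towerE n) with hsmall | hlarge
  · rwa [G_succ_of_le hsmall]
  rw [G_succ_of_lt hlarge, G_succ_of_lt ((towerE_lt_succ n).trans_le hc)]
  have hsq : τ * c ≤ c ^ 2 := by nlinarith
  have hlog : iterLog (n + 1) (τ * c) ≤ 2 * iterLog (n + 1) c :=
    (iterLog_monotoneOn n hlarge.le (hlarge.le.trans hsq) hsq).trans (iterLog_sq_le n hc)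
  calc τ * c * iterLog (n + 1) (τ * c) ≤ τ * c * (2 * iterLog (n + 1) c) :=
        mul_le_mul_of_nonneg_left hlog ((towerE_pos n).trans hlarge).le
    _ = 2 * τ * (c * iterLog (n + 1) c) := by ring

end G

theorem G_scaling (N : ℕ) (hN : 1 ≤ N) (τ : ℝ) (hτ : 0 < τ) :
    ∃ a ≥ (0 : ℝ), ∃ b ≥ (0 : ℝ), a = 2 * τ ∧
      ∀ c : ℝ, 0 ≤ c → G N (τ * c) ≤ a * G N c + b := by
  obtain ⟨n, rfl⟩ : ∃ n, N = n + 1 := ⟨N - 1, by omega⟩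
  set C := max τ (towerE (n + 1))
  refine ⟨2 * τ, by positivity, G (n + 1) (τ * C), G_succ_nonneg n _, rfl, fun c _ => ?_⟩
  have hGc : 0 ≤ 2 * τ * G (n + 1) c := mul_nonneg (by positivity) (G_succ_nonneg n c)
  rcases le_total c C with hsmall | hlarge
  · have : G (n + 1) (τ * c) ≤ G (n + 1) (τ * C) :=
      G_succ_monotone n (mul_le_mul_of_nonneg_left hsmall hτ.le)
    linarith
  · have := G_succ_mul_le hτ.le ((le_max_left _ _).trans hlarge) ((le_max_right _ _).trans hlarge)
    linarith [G_succ_nonneg n (τ * C)]
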